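/- Let G be a finite connected simple graph such that for every pair of adjacent vertices i and j, either N[i] ⊆ N[j] or N[j] ⊆ N[i]. Let T be the quotient of the vertex set by the equivalence relation N[i] = N[j], partially ordered by ū ⪯ v̄ ⇔ N[v] ⊆ N[u] (well defined on classes). Then: (a) T has a minimum element; (b) for every u ∈ T, the set {v ∈ T : v ⪯ u} is totally ordered by ⪯ (so the Hasse diagram of T is a rooted tree whose root is the minimum); and (c) no element of T is covered by exactly one element, i.e., for every u ∈ T the number of v ∈ T covering u is not equal to one. -/

import Mathlib

/-!
If `j ∈ N[k]` then `N[j]` and `N[k]` are comparable, by the nesting hypothesis. Hence a vertex `m`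
with a largest closed neighbourhood absorbs the neighbourhood of every neighbour of a vertex it
already absorbs, and by connectedness `N[w] ⊆ N[m]` for all `w`: the class of `m` is the minimum.
Everything below `ī` comes from a vertex `j` with `i ∈ N[j]`, i.e. `j ∈ N[i]`, so these classes are
pairwise comparable. Finally, if `j̄` covers `ī`, a vertex `x ∈ N[i] \ N[j]` satisfies
`N[x] ⊊ N[i]` and `N[x] ⊄ N[j]`, so some cover of `ī` below `x̄` differs from `j̄`.
-/

open SimpleGraph

noncomputable section

/-- The closed neighborhood `N[i] = {i} ∪ {j : j ~ i}`. -/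
def closedNbhd {V : Type*} (G : SimpleGraph V) (i : V) : Set V :=
  insert i (G.neighborSet i)

/-- The equivalence relation `N[i] = N[j]` on the vertices. -/
def nbhdSetoid {V : Type*} (G : SimpleGraph V) : Setoid V :=
  ⟨fun i j => closedNbhd G i = closedNbhd G j,
   ⟨fun _ => rfl, fun h => h.symm, fun h₁ h₂ => h₁.trans h₂⟩⟩

/-- The quotient `T = V / R`. -/
def HasseT {V : Type*} (G : SimpleGraph V) : Type _ := Quotient (nbhdSetoid G)

/-- The partial order `ū ⪯ v̄ ⇔ N[v] ⊆ N[u]` on `T`. -/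
def leT {V : Type*} (G : SimpleGraph V) : HasseT G → HasseT G → Prop :=
  Quotient.lift₂ (fun i j => closedNbhd G j ⊆ closedNbhd G i)
    (fun a b a' b' ha hb => by
      have h1 : closedNbhd G a = closedNbhd G a' := ha
      have h2 : closedNbhd G b = closedNbhd G b' := hb
      simp [h1, h2])

/-- The strict order on `T`. -/
def ltT {V : Type*} (G : SimpleGraph V) (u v : HasseT G) : Prop :=
  leT G u v ∧ ¬ leT G v u

/-- `v` covers `u` in `T`. -/
def covT {V : Type*} (G : SimpleGraph V) (u v : HasseT G) : Prop :=
  ltT G u v ∧ ∀ w : HasseT G, ltT G u w → ltT G w v → False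

theorem natCard_covBy_ne_one_of_exists_not_le {α : Type*} [Preorder α] [IsStronglyAtomic α] {u : α}
    (h : ∀ v, u ⋖ v → ∃ x, u < x ∧ ¬ v ≤ x) : Nat.card {v // u ⋖ v} ≠ 1 := by
  intro hcard
  obtain ⟨⟨v, hv⟩, hunique⟩ := Nat.card_eq_one_iff_exists.mp hcard
  obtain ⟨x, hux, hvx⟩ := h v hv
  obtain ⟨c, hc, hcx⟩ := exists_covBy_le_of_lt hux
  obtain rfl : c = v := congrArg Subtype.val (hunique ⟨c, hc⟩)
  exact hvx hcx

section ClosedNbhd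

variable {V : Type*} {G : SimpleGraph V} {i j k : V}

theorem mem_closedNbhd_iff : i ∈ closedNbhd G j ↔ i = j ∨ G.Adj j i := by
  simp [closedNbhd]

theorem self_mem_closedNbhd (i : V) : i ∈ closedNbhd G i := Set.mem_insert _ _

theorem mem_closedNbhd_comm : i ∈ closedNbhd G j ↔ j ∈ closedNbhd G i := by
  simp only [mem_closedNbhd_iff, G.adj_comm, eq_comm]

variable (G) in
def ClosedNbhdsNested : Prop :=
  ∀ i j : V, G.Adj i j → closedNbhd G i ⊆ closedNbhd G j ∨ closedNbhd G j ⊆ closedNbhd G i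

namespace ClosedNbhdsNested

variable (hG : ClosedNbhdsNested G)
include hG

theorem total_of_mem (hjk : j ∈ closedNbhd G k) :
    closedNbhd G j ⊆ closedNbhd G k ∨ closedNbhd G k ⊆ closedNbhd G j := by
  rcases mem_closedNbhd_iff.mp hjk with rfl | hadj
  · exact Or.inl subset_rfl
  · exact hG j k hadj.symm

theorem total_of_subset (hij : closedNbhd G i ⊆ closedNbhd G j)
    (hik : closedNbhd G i ⊆ closedNbhd G k) :
    closedNbhd G j ⊆ closedNbhd G k ∨ closedNbhd G k ⊆ closedNbhd G j :=
  hG.total_of_mem (hik (mem_closedNbhd_comm.mp (hij (self_mem_closedNbhd i))))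

theorem exists_forall_closedNbhd_subset [Finite V] (hconn : G.Connected) :
    ∃ m, ∀ w, closedNbhd G w ⊆ closedNbhd G m := by
  have : Nonempty V := hconn.nonempty
  obtain ⟨m, hmax⟩ := Finite.exists_max fun v => (closedNbhd G v).ncard
  have step {a b : V} (hab : G.Adj a b) (ha : closedNbhd G a ⊆ closedNbhd G m) :
      closedNbhd G b ⊆ closedNbhd G m := by
    rcases hG.total_of_mem (ha (mem_closedNbhd_iff.mpr (Or.inr hab))) with h | h
    · exact h
    · exact (Set.eq_of_subset_of_ncard_le h (hmax b) (Set.toFinite _)).ge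
  refine ⟨m, fun w => ?_⟩
  induction (reachable_iff_reflTransGen m w).mp (hconn m w) with
  | refl => exact subset_rfl
  | tail _ hab ih => exact step hab ih

theorem exists_ssubset_not_subset (hji : closedNbhd G j ⊂ closedNbhd G i) :
    ∃ x, closedNbhd G x ⊂ closedNbhd G i ∧ ¬ closedNbhd G x ⊆ closedNbhd G j := by
  obtain ⟨x, hxi, hxj⟩ := Set.exists_of_ssubset hji
  have hjx : ¬ closedNbhd G i ⊆ closedNbhd G x := fun h =>
    hxj (mem_closedNbhd_comm.mp (h (hji.subset (self_mem_closedNbhd j))))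
  refine ⟨x, ⟨(hG.total_of_mem hxi).resolve_right hjx, hjx⟩, fun h => hxj ?_⟩
  exact h (self_mem_closedNbhd x)

end ClosedNbhdsNested

end ClosedNbhd

namespace HasseT

variable {V : Type*} {G : SimpleGraph V}

variable (G) in
def mk (a : V) : HasseT G := Quotient.mk (nbhdSetoid G) a

@[elab_as_elim]
theorem ind {motive : HasseT G → Prop} (h : ∀ a, motive (mk G a)) (u : HasseT G) : motive u :=
  Quotient.ind h u

theorem mk_eq_mk {a b : V} (h : closedNbhd G a = closedNbhd G b) : mk G a = mk G b :=
  Quotient.sound h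

/-- With `lt := ltT G`, `leT G` and `covT G` are definitionally `≤` and `⋖`. -/
instance : PartialOrder (HasseT G) where
  le := leT G
  lt := ltT G
  le_refl u := by
    induction u using ind
    exact subset_rfl
  le_trans u v w := by
    induction u using ind
    induction v using ind
    induction w using ind
    exact fun huv hvw => hvw.trans huv
  lt_iff_le_not_ge _ _ := Iff.rfl
  le_antisymm u v := by
    induction u using ind
    induction v using ind
    exact fun huv hvu => mk_eq_mk (huv.antisymm hvu).symm

instance [Finite V] : Finite (HasseT G) := inferInstanceAs (Finite (Quotient (nbhdSetoid G)))

theorem mk_le_mk {a b : V} : mk G a ≤ mk G b ↔ closedNbhd G b ⊆ closedNbhd G a := Iff.rfl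

theorem mk_lt_mk {a b : V} : mk G a < mk G b ↔ closedNbhd G b ⊂ closedNbhd G a := Iff.rfl

variable (hG : ClosedNbhdsNested G)
include hG

theorem exists_forall_le [Finite V] (hconn : G.Connected) : ∃ m : HasseT G, ∀ u, m ≤ u := by
  obtain ⟨m, hm⟩ := hG.exists_forall_closedNbhd_subset hconn
  exact ⟨mk G m, ind fun w => mk_le_mk.mpr (hm w)⟩

theorem isChain_Iic (u : HasseT G) : IsChain (· ≤ ·) (Set.Iic u) := by
  induction u using ind with | h i =>
  intro v hv w hw _
  induction v using ind with | h j =>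
  induction w using ind with | h k =>
  exact (hG.total_of_subset (mk_le_mk.mp hv) (mk_le_mk.mp hw)).symm

theorem natCard_covBy_ne_one [Finite V] (u : HasseT G) : Nat.card {v // u ⋖ v} ≠ 1 := by
  refine natCard_covBy_ne_one_of_exists_not_le fun v huv => ?_
  induction u using ind with | h i =>
  induction v using ind with | h j =>
  obtain ⟨x, hxi, hxj⟩ := hG.exists_ssubset_not_subset (mk_lt_mk.mp huv.lt)
  exact ⟨mk G x, mk_lt_mk.mpr hxi, hxj⟩

end HasseT

theorem statement4 {V : Type*} [Fintype V] (G : SimpleGraph V) (hconn : G.Connected)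
    (hhom : ∀ i j : V, G.Adj i j →
      (closedNbhd G i ⊆ closedNbhd G j ∨ closedNbhd G j ⊆ closedNbhd G i)) :
    (∃ m : HasseT G, ∀ u : HasseT G, leT G m u) ∧
    (∀ u v w : HasseT G, leT G v u → leT G w u → (leT G v w ∨ leT G w v)) ∧
    (∀ u : HasseT G, Nat.card {v : HasseT G // covT G u v} ≠ 1) :=
  ⟨HasseT.exists_forall_le hhom hconn,
    fun u _ _ hv hw => (HasseT.isChain_Iic hhom u).total hv hw,
    HasseT.natCard_covBy_ne_one hhom⟩

end
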